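/- arXiv:1905.02109 — 3 statements merged into one kernel-verified Lean document; each statement's English description precedes it below -/
import Mathlib

section
/- For 0 < p < q < ∞, the topology 𝒯_q on ℝ^ℕ is strictly contained in the topology 𝒯_p: every 𝒯_q-open set is 𝒯_p-open, but there exists a 𝒯_p-open set that is not 𝒯_q-open. -/
open ENNReal

noncomputable def Sr (r : ℝ) (x y : ℕ → ℝ) : ℝ≥0∞ :=
  ∑' i, ENNReal.ofReal (|x i - y i| ^ r)

/-- The distance `d_p` on `ℝ^ℕ`: for `0 < p < 1` it is
`min {1, ∑_i |x_i - y_i|^p}`, and for `1 ≤ p < ∞` it is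
`min {1, (∑_i |x_i - y_i|^p)^(1/p)}` (value `1` when the series diverges). -/
noncomputable def dP (p : ℝ) (x y : ℕ → ℝ) : ℝ :=
  if p < 1 then (min 1 (∑' i, ENNReal.ofReal (|x i - y i| ^ p))).toReal
  else (min 1 ((∑' i, ENNReal.ofReal (|x i - y i| ^ p)) ^ (1 / p))).toReal

lemma dP_eq (p : ℝ) (x y : ℕ → ℝ) :
    dP p x y = if p < 1 then (min 1 (Sr p x y)).toReal
      else (min 1 ((Sr p x y) ^ (1 / p))).toReal := rfl

lemma Sr_mono_exp {p q : ℝ} (hp : 0 < p) (hpq : p ≤ q) (x y : ℕ → ℝ)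
    (h : Sr p x y ≤ 1) : Sr q x y ≤ Sr p x y := by
  refine ENNReal.tsum_le_tsum fun i => ?_
  have h1 : ENNReal.ofReal (|x i - y i| ^ p) ≤ 1 := le_trans (ENNReal.le_tsum i) h
  have h2 : |x i - y i| ^ p ≤ 1 := by
    by_contra hc
    push_neg at hc
    have := ENNReal.one_lt_ofReal.mpr hc
    exact absurd h1 (not_le.mpr this)
  have habs : (0:ℝ) ≤ |x i - y i| := abs_nonneg _
  have h3 : |x i - y i| ≤ 1 := by
    by_contra hc
    push_neg at hc
    exact absurd (Real.one_lt_rpow_iff_of_pos (lt_trans one_pos hc) |>.mpr (Or.inl ⟨hc, hp⟩))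
      (not_lt.mpr h2)
  exact ENNReal.ofReal_le_ofReal
    (Real.rpow_le_rpow_of_exponent_ge' habs h3 hp.le hpq)

lemma Sr_lt_of_dP {r δ : ℝ} (hr : 0 < r) (hδ : 0 < δ) (hδ1 : δ ≤ 1)
    (x y : ℕ → ℝ) (h : dP r x y < (if r < 1 then δ else δ ^ (1/r))) :
    Sr r x y < ENNReal.ofReal δ := by
  have hofδ1 : ENNReal.ofReal δ ≤ 1 := ENNReal.ofReal_le_one.mpr hδ1
  rw [dP_eq] at h
  by_cases hr1 : r < 1
  · rw [if_pos hr1, if_pos hr1] at h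
    have hfin : min 1 (Sr r x y) ≠ ⊤ := ne_top_of_le_ne_top one_ne_top (min_le_left _ _)
    have h2 : min 1 (Sr r x y) < ENNReal.ofReal δ :=
      (ENNReal.lt_ofReal_iff_toReal_lt hfin).mpr h
    rcases le_total 1 (Sr r x y) with hS | hS
    · rw [min_eq_left hS] at h2
      exact absurd (lt_of_lt_of_le h2 hofδ1) (lt_irrefl _)
    · rwa [min_eq_right hS] at h2
  · rw [if_neg hr1, if_neg hr1] at h
    have hfin : min 1 ((Sr r x y) ^ (1/r)) ≠ ⊤ :=
      ne_top_of_le_ne_top one_ne_top (min_le_left _ _)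
    have h2 : min 1 ((Sr r x y) ^ (1/r)) < ENNReal.ofReal (δ ^ (1/r)) :=
      (ENNReal.lt_ofReal_iff_toReal_lt hfin).mpr h
    rw [← ENNReal.ofReal_rpow_of_pos hδ] at h2
    have hle1 : (ENNReal.ofReal δ) ^ (1/r) ≤ 1 :=
      ENNReal.rpow_le_one hofδ1 (by positivity)
    have h3 : (Sr r x y) ^ (1/r) < (ENNReal.ofReal δ) ^ (1/r) := by
      rcases le_total 1 ((Sr r x y) ^ (1/r)) with hS | hS
      · rw [min_eq_left hS] at h2
        exact absurd (lt_of_lt_of_le h2 hle1) (lt_irrefl _)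
      · rwa [min_eq_right hS] at h2
    have h4 := ENNReal.rpow_lt_rpow h3 hr
    rwa [← ENNReal.rpow_mul, ← ENNReal.rpow_mul, one_div, inv_mul_cancel₀ hr.ne',
      ENNReal.rpow_one, ENNReal.rpow_one] at h4

lemma dP_lt_of_Sr {r ε : ℝ} (hr : 0 < r) (hε : 0 < ε)
    (x y : ℕ → ℝ) (h : Sr r x y < ENNReal.ofReal (if r < 1 then ε else ε ^ r)) :
    dP r x y < ε := by
  rw [dP_eq]
  by_cases hr1 : r < 1
  · rw [if_pos hr1]
    rw [if_pos hr1] at h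
    exact ENNReal.toReal_lt_of_lt_ofReal (lt_of_le_of_lt (min_le_right _ _) h)
  · rw [if_neg hr1]
    rw [if_neg hr1] at h
    rw [← ENNReal.ofReal_rpow_of_pos hε] at h
    have h2 : (Sr r x y) ^ (1/r) < ((ENNReal.ofReal ε) ^ r) ^ (1/r) :=
      ENNReal.rpow_lt_rpow h (by positivity)
    rw [← ENNReal.rpow_mul, mul_one_div, div_self hr.ne', ENNReal.rpow_one] at h2
    exact ENNReal.toReal_lt_of_lt_ofReal (lt_of_le_of_lt (min_le_right _ _) h2)

lemma key_cont {p q : ℝ} (hp : 0 < p) (hq : 0 < q) (hpq : p ≤ q) :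
    ∀ ε > 0, ∃ δ > 0, ∀ x y : ℕ → ℝ, dP p x y < δ → dP q x y < ε := by
  intro ε hε
  set ε₁ := min ε 1 / 2 with hε₁def
  have hε₁ : 0 < ε₁ := by positivity
  have hε₁1 : ε₁ ≤ 1 := by
    have : min ε 1 ≤ 1 := min_le_right _ _
    simp only [hε₁def]; linarith
  have hε₁ε : ε₁ < ε := by
    have : min ε 1 ≤ ε := min_le_left _ _
    simp only [hε₁def]; linarith
  set ρ := if q < 1 then ε₁ else ε₁ ^ q with hρdef
  have hρ : 0 < ρ := by
    rw [hρdef]; split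
    · exact hε₁
    · positivity
  have hρ1 : ρ ≤ 1 := by
    rw [hρdef]; split
    · exact hε₁1
    · exact Real.rpow_le_one hε₁.le hε₁1 hq.le
  refine ⟨if p < 1 then ρ else ρ ^ (1/p), ?_, ?_⟩
  · split
    · exact hρ
    · positivity
  · intro x y hxy
    have hSp : Sr p x y < ENNReal.ofReal ρ := Sr_lt_of_dP hp hρ hρ1 x y hxy
    have hSp1 : Sr p x y ≤ 1 :=
      le_of_lt (lt_of_lt_of_le hSp (ENNReal.ofReal_le_one.mpr hρ1))
    have hSq : Sr q x y < ENNReal.ofReal ρ :=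
      lt_of_le_of_lt (Sr_mono_exp hp hpq x y hSp1) hSp
    rw [hρdef] at hSq
    exact lt_trans (dP_lt_of_Sr hq hε₁ x y hSq) hε₁ε

lemma isOpen_iff' (m : MetricSpace (ℕ → ℝ)) (s : Set (ℕ → ℝ)) :
    @IsOpen _ m.toUniformSpace.toTopologicalSpace s ↔
    ∀ x ∈ s, ∃ ε > 0, ∀ y, m.toDist.dist y x < ε → y ∈ s := by
  letI := m
  rw [Metric.isOpen_iff]
  constructor
  · intro h x hx
    obtain ⟨ε, hε, hball⟩ := h x hx
    exact ⟨ε, hε, fun y hy => hball hy⟩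
  · intro h x hx
    obtain ⟨ε, hε, hball⟩ := h x hx
    exact ⟨ε, hε, fun y hy => hball y hy⟩

lemma Sr_witness {r : ℝ} (hr : 0 < r) {c : ℝ} (hc : 0 ≤ c) (n : ℕ) :
    Sr r (fun i => if i < n then c else 0) 0 = ENNReal.ofReal (n * c ^ r) := by
  unfold Sr
  have hterm : ∀ i, ENNReal.ofReal (|(if i < n then c else 0) - (0 : ℕ → ℝ) i| ^ r)
      = if i < n then ENNReal.ofReal (c ^ r) else 0 := by
    intro i
    simp only [Pi.zero_apply, sub_zero]
    split
    · rw [abs_of_nonneg hc]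
    · rw [abs_zero, Real.zero_rpow hr.ne', ENNReal.ofReal_zero]
  calc (∑' i, ENNReal.ofReal (|(if i < n then c else 0) - (0 : ℕ → ℝ) i| ^ r))
      = ∑' i, (if i < n then ENNReal.ofReal (c ^ r) else 0) := by
        exact tsum_congr hterm
    _ = ∑ i ∈ Finset.range n, (if i < n then ENNReal.ofReal (c ^ r) else 0) := by
        refine tsum_eq_sum ?_
        intro i hi
        rw [if_neg (by simpa using hi)]
    _ = ∑ i ∈ Finset.range n, ENNReal.ofReal (c ^ r) := by
        refine Finset.sum_congr rfl fun i hi => ?_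
        rw [if_pos (Finset.mem_range.mp hi)]
    _ = n * ENNReal.ofReal (c ^ r) := by
        rw [Finset.sum_const, nsmul_eq_mul, Finset.card_range]
    _ = ENNReal.ofReal (n * c ^ r) := by
        rw [ENNReal.ofReal_mul (by positivity), ENNReal.ofReal_natCast]

/-- for `0 < p < q < ∞`, the topology `𝒯_q` is strictly contained
in `𝒯_p`: every `𝒯_q`-open set is `𝒯_p`-open, but some `𝒯_p`-open set is not
`𝒯_q`-open. -/
theorem topology_q_strictly_contained_in_topology_p
    (p q : ℝ) (hp : 0 < p) (hpq : p < q)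
    (mp mq : MetricSpace (ℕ → ℝ))
    (hmp : ∀ x y : ℕ → ℝ, mp.toDist.dist x y = dP p x y)
    (hmq : ∀ x y : ℕ → ℝ, mq.toDist.dist x y = dP q x y) :
    (∀ s : Set (ℕ → ℝ),
        @IsOpen (ℕ → ℝ) mq.toUniformSpace.toTopologicalSpace s →
        @IsOpen (ℕ → ℝ) mp.toUniformSpace.toTopologicalSpace s) ∧
    (∃ s : Set (ℕ → ℝ),
        @IsOpen (ℕ → ℝ) mp.toUniformSpace.toTopologicalSpace s ∧
        ¬ @IsOpen (ℕ → ℝ) mq.toUniformSpace.toTopologicalSpace s) := by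
  have hq : 0 < q := hp.trans hpq
  constructor
  · intro s hs
    rw [isOpen_iff' mq] at hs
    rw [isOpen_iff' mp]
    intro x hx
    obtain ⟨ε, hε, hball⟩ := hs x hx
    obtain ⟨δ, hδ, hkey⟩ := key_cont hp hq hpq.le ε hε
    refine ⟨δ, hδ, fun y hy => hball y ?_⟩
    rw [hmq]
    rw [hmp] at hy
    exact hkey y x hy
  · refine ⟨{y | mp.toDist.dist y 0 < 1/2}, ?_, ?_⟩
    · rw [isOpen_iff' mp]
      intro x hx
      simp only [Set.mem_setOf_eq] at hx
      refine ⟨1/2 - mp.toDist.dist x 0, by linarith, fun y hy => ?_⟩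
      simp only [Set.mem_setOf_eq]
      have htri := mp.dist_triangle y x 0
      linarith
    · intro hop
      rw [isOpen_iff' mq] at hop
      have h0 : (0 : ℕ → ℝ) ∈ {y | mp.toDist.dist y 0 < 1/2} := by
        simp only [Set.mem_setOf_eq, mp.dist_self]
        norm_num
      obtain ⟨δ, hδ, hball⟩ := hop 0 h0
      set δ' := min δ 1 / 2 with hδ'def
      have hδ'pos : 0 < δ' := by positivity
      have hδ'δ : δ' < δ := by
        have : min δ 1 ≤ δ := min_le_left _ _
        rw [hδ'def]; linarith
      have hδ'1 : δ' < 1 := by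
        have : min δ 1 ≤ 1 := min_le_right _ _
        rw [hδ'def]; linarith
      set e := max 1 (1/q) with hedef
      have he1 : 1 ≤ e := le_max_left _ _
      have heq : 1 ≤ e * q := by
        have h1 : 1/q ≤ e := le_max_right _ _
        calc (1:ℝ) = (1/q) * q := by field_simp
          _ ≤ e * q := mul_le_mul_of_nonneg_right h1 hq.le
      set t := δ' ^ e with htdef
      have ht : 0 < t := Real.rpow_pos_of_pos hδ'pos e
      have ht1 : t ≤ δ' := by
        have := Real.rpow_le_rpow_of_exponent_ge hδ'pos hδ'1.le he1
        rwa [Real.rpow_one] at this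
      have htδ : t < δ := lt_of_le_of_lt ht1 hδ'δ
      have htq : t ^ q ≤ δ' := by
        rw [htdef, ← Real.rpow_mul hδ'pos.le]
        have := Real.rpow_le_rpow_of_exponent_ge hδ'pos hδ'1.le heq
        rwa [Real.rpow_one] at this
      set α := 1 - p/q with hαdef
      have hα : 0 < α := by
        rw [hαdef]
        have : p/q < 1 := (div_lt_one hq).mpr hpq
        linarith
      set M := t ^ (-p/α) with hMdef
      have hM : 0 < M := Real.rpow_pos_of_pos ht _
      set n := ⌈M⌉₊ + 1 with hndef
      have hnM : M ≤ (n : ℝ) := by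
        calc M ≤ (⌈M⌉₊ : ℝ) := Nat.le_ceil M
          _ ≤ (n : ℝ) := by rw [hndef]; exact_mod_cast Nat.le_succ _
      have hnpos : (0 : ℝ) < (n : ℝ) := lt_of_lt_of_le hM hnM
      set c := (n : ℝ) ^ (-(1/q)) * t with hcdef
      have hc : 0 ≤ c := by positivity
      set w : ℕ → ℝ := fun i => if i < n then c else 0 with hwdef
      -- pow computations
      have hcr : ∀ r : ℝ, 0 < r → (n : ℝ) * c ^ r = (n : ℝ) ^ (1 - r/q) * t ^ r := by
        intro r hr
        rw [hcdef, Real.mul_rpow (by positivity) ht.le, ← Real.rpow_mul hnpos.le]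
        rw [show ((n:ℝ)) * ((n:ℝ) ^ (-(1/q)*r) * t^r) = ((n:ℝ)^(1:ℝ) * (n:ℝ)^(-(1/q)*r)) * t^r by
          rw [Real.rpow_one]; ring]
        rw [← Real.rpow_add hnpos]
        congr 2
        ring
      have hSq : Sr q w 0 = ENNReal.ofReal (t ^ q) := by
        rw [hwdef, Sr_witness hq hc n, hcr q hq]
        congr 1
        rw [show 1 - q/q = (0:ℝ) by field_simp; norm_num, Real.rpow_zero, one_mul]
      have hSp : Sr p w 0 = ENNReal.ofReal ((n:ℝ) ^ α * t ^ p) := by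
        rw [hwdef, Sr_witness hp hc n, hcr p hp, hαdef]
      have h1le : (1:ℝ) ≤ (n:ℝ) ^ α * t ^ p := by
        have hMα : M ^ α = t ^ (-p) := by
          rw [hMdef, ← Real.rpow_mul ht.le, div_mul_cancel₀ _ hα.ne']
        have hnα : t ^ (-p) ≤ (n:ℝ) ^ α := by
          rw [← hMα]
          exact Real.rpow_le_rpow hM.le hnM hα.le
        calc (1:ℝ) = t ^ (-p) * t ^ p := by
              rw [← Real.rpow_add ht, neg_add_cancel, Real.rpow_zero]
          _ ≤ (n:ℝ) ^ α * t ^ p :=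
              mul_le_mul_of_nonneg_right hnα (Real.rpow_pos_of_pos ht p).le
      have hSp1 : 1 ≤ Sr p w 0 := by
        rw [hSp]
        exact ENNReal.one_le_ofReal.mpr h1le
      have hdPp : dP p w 0 = 1 := by
        rw [dP_eq]
        split
        · rw [min_eq_left hSp1, ENNReal.toReal_one]
        · have : 1 ≤ (Sr p w 0) ^ (1/p) := by
            calc (1:ℝ≥0∞) = 1 ^ (1/p) := (ENNReal.one_rpow _).symm
              _ ≤ (Sr p w 0) ^ (1/p) := ENNReal.rpow_le_rpow hSp1 (by positivity)
          rw [min_eq_left this, ENNReal.toReal_one]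
      have hdq : dP q w 0 < δ := by
        refine dP_lt_of_Sr hq hδ w 0 ?_
        rw [hSq]
        split
        · exact (ENNReal.ofReal_lt_ofReal_iff hδ).mpr (lt_of_le_of_lt htq hδ'δ)
        · exact (ENNReal.ofReal_lt_ofReal_iff (by positivity)).mpr
            (Real.rpow_lt_rpow ht.le htδ hq)
      have hw := hball w (by rw [hmq]; exact hdq)
      simp only [Set.mem_setOf_eq] at hw
      rw [hmp, hdPp] at hw
      linarith
end

section
/- The geometric-series function f(x) = ∑_{α ∈ ℕ^(ℕ)} x^α is well defined (the family is absolutely summable) on the domain D = {x = (x_i) ∈ ℝ^ℕ : ∑_i |x_i| < 1}, and for x ∈ D one has f(x) = ∏_{i=1}^∞ 1/(1 - x_i). -/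
/-!
Removing one index `a` splits a monomial supported in `insert a T` as `x a ^ n * x ^ β` with `β`
supported in `T`, so by induction the monomials supported in a finite set `T` sum (as a Cauchy
product of geometric series) to `∏ i ∈ T, (1 - x i)⁻¹`. For `r i = ‖x i‖`, the Weierstrass
inequality `1 - ∑ r i ≤ ∏ (1 - r i)` bounds these finite products by `(1 - ∑' i, r i)⁻¹`, which
gives absolute summability. The partial products are the sums of the family truncated to monomials
supported in `T`, and these converge to the full sum by dominated convergence.
-/

open Finset

noncomputable section

variable {ι K : Type*}

def multiPow [CommMonoid K] (x : ι → K) (α : ι →₀ ℕ) : K :=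
  α.prod fun i e => x i ^ e

theorem multiPow_single_add [CommMonoid K] [DecidableEq ι] (x : ι → K) (a : ι) (n : ℕ)
    (β : ι →₀ ℕ) : multiPow x (Finsupp.single a n + β) = x a ^ n * multiPow x β := by
  rw [multiPow, Finsupp.prod_add_index' (fun i => pow_zero (x i)) (fun i => pow_add (x i))]
  exact congrArg (· * multiPow x β) (Finsupp.prod_single_index (pow_zero (x a)))

theorem norm_multiPow [NormedField K] (x : ι → K) (α : ι →₀ ℕ) :
    ‖multiPow x α‖ = multiPow (‖x ·‖) α := by
  simp only [multiPow, Finsupp.prod, norm_prod, norm_pow]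

theorem multiPow_nonneg {r : ι → ℝ} (hr : 0 ≤ r) (α : ι →₀ ℕ) : 0 ≤ multiPow r α :=
  prod_nonneg fun i _ => pow_nonneg (hr i) _

namespace Finsupp

def supportedInsertEquiv [DecidableEq ι] {a : ι} {T : Finset ι} (ha : a ∉ T) :
    ℕ × {β : ι →₀ ℕ // β.support ⊆ T} ≃ {α : ι →₀ ℕ // α.support ⊆ insert a T} where
  toFun p := ⟨single a p.1 + p.2, support_add.trans <|
    union_subset (support_single_subset.trans <| by simp) (p.2.2.trans <| subset_insert a T)⟩
  invFun α := (α.1 a, ⟨α.1.erase a, fun i hi => by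
    rw [support_erase, mem_erase] at hi
    exact (mem_insert.mp (α.2 hi.2)).resolve_left hi.1⟩)
  left_inv := by
    rintro ⟨n, β, hβ⟩
    have hβa : β a = 0 := notMem_support_iff.mp fun h => ha (hβ h)
    simp [hβa, erase_add]
  right_inv α := Subtype.ext (single_add_erase a α.1)

@[simp]
theorem supportedInsertEquiv_apply_coe [DecidableEq ι] {a : ι} {T : Finset ι} (ha : a ∉ T)
    (p : ℕ × {β : ι →₀ ℕ // β.support ⊆ T}) :
    (supportedInsertEquiv ha p : ι →₀ ℕ) = single a p.1 + p.2 := rfl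

end Finsupp

theorem one_sub_sum_le_prod_one_sub {R : Type*} [CommRing R] [LinearOrder R]
    [IsStrictOrderedRing R] {r : ι → R} (T : Finset ι) (h0 : ∀ i ∈ T, 0 ≤ r i)
    (h1 : ∀ i ∈ T, r i ≤ 1) : 1 - ∑ i ∈ T, r i ≤ ∏ i ∈ T, (1 - r i) := by
  classical
  induction T using Finset.induction with
  | empty => simp
  | insert a T ha ih =>
    rw [prod_insert ha, sum_insert ha]
    have ih := ih (fun i hi => h0 i (mem_insert_of_mem hi)) fun i hi => h1 i (mem_insert_of_mem hi)
    have hra := h0 a (mem_insert_self a T)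
    have hsum : 0 ≤ ∑ i ∈ T, r i := sum_nonneg fun i hi => h0 i (mem_insert_of_mem hi)
    nlinarith [mul_le_mul_of_nonneg_left ih (sub_nonneg.mpr (h1 a (mem_insert_self a T)))]

section NormedField

variable [NormedField K] {x : ι → K}

theorem summable_norm_and_hasSum_multiPow_supported [CompleteSpace K] (T : Finset ι)
    (hx : ∀ i ∈ T, ‖x i‖ < 1) :
    Summable (fun α : {α : ι →₀ ℕ // α.support ⊆ T} => ‖multiPow x α‖) ∧
      HasSum (fun α : {α : ι →₀ ℕ // α.support ⊆ T} => multiPow x α) (∏ i ∈ T, (1 - x i)⁻¹) := by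
  classical
  induction T using Finset.induction with
  | empty =>
    have hzero (α : {α : ι →₀ ℕ // α.support ⊆ ∅}) : α = ⟨0, by simp⟩ :=
      Subtype.ext (Finsupp.support_eq_empty.mp (subset_empty.mp α.2))
    refine ⟨(hasSum_single _ fun α hα => absurd (hzero α) hα).summable, ?_⟩
    simpa [multiPow] using hasSum_single (f := fun α : {α : ι →₀ ℕ // α.support ⊆ ∅} =>
      multiPow x α) _ fun α hα => absurd (hzero α) hα
  | insert a T ha ih =>
    obtain ⟨ih_norm, ih_sum⟩ := ih fun i hi => hx i (mem_insert_of_mem hi)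
    have hxa := hx a (mem_insert_self a T)
    have hgeom_norm : Summable fun n : ℕ => ‖x a ^ n‖ := by
      simpa [norm_pow] using summable_geometric_of_lt_one (norm_nonneg _) hxa
    rw [prod_insert ha, ← (Finsupp.supportedInsertEquiv ha).summable_iff,
      ← (Finsupp.supportedInsertEquiv ha).hasSum_iff]
    simp only [Function.comp_def, Finsupp.supportedInsertEquiv_apply_coe, multiPow_single_add]
    have hprod_norm := Summable.mul_norm (R := K) (f := fun n : ℕ => x a ^ n)
      (g := fun α : {α : ι →₀ ℕ // α.support ⊆ T} => multiPow x α) hgeom_norm ih_norm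
    have hgeom := hasSum_geometric_of_norm_lt_one hxa
    have hprod := hprod_norm.of_norm
    have hsum := hgeom.mul ih_sum hprod
    exact ⟨hprod_norm, hsum⟩

theorem hasSum_indicator_multiPow [CompleteSpace K] (T : Finset ι) (hx : ∀ i ∈ T, ‖x i‖ < 1) :
    HasSum ({α : ι →₀ ℕ | α.support ⊆ T}.indicator (multiPow x)) (∏ i ∈ T, (1 - x i)⁻¹) :=
  hasSum_subtype_iff_indicator.mp (summable_norm_and_hasSum_multiPow_supported T hx).2

theorem summable_multiPow_of_tsum_lt_one {r : ι → ℝ} (h0 : 0 ≤ r) (hr : Summable r)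
    (hr1 : ∑' i, r i < 1) : Summable (multiPow r) := by
  classical
  have hlt : ∀ i, r i < 1 := fun i => (hr.le_tsum i fun j _ => h0 j).trans_lt hr1
  refine summable_of_sum_le (c := (1 - ∑' i, r i)⁻¹) (multiPow_nonneg h0) fun S => ?_
  set T := S.sup Finsupp.support
  have hST : ∀ α ∈ S, α.support ⊆ T := fun α hα => le_sup (f := Finsupp.support) hα
  calc ∑ α ∈ S, multiPow r α
      = ∑ α ∈ S, {α : ι →₀ ℕ | α.support ⊆ T}.indicator (multiPow r) α :=
        sum_congr rfl fun α hα => (Set.indicator_of_mem (hST α hα) _).symm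
    _ ≤ ∏ i ∈ T, (1 - r i)⁻¹ :=
        sum_le_hasSum S (fun α _ => Set.indicator_nonneg (fun β _ => multiPow_nonneg h0 β) α)
          (hasSum_indicator_multiPow T fun i _ => by simpa [abs_of_nonneg (h0 i)] using hlt i)
    _ = (∏ i ∈ T, (1 - r i))⁻¹ := prod_inv_distrib _
    _ ≤ (1 - ∑' i, r i)⁻¹ := by
        refine inv_anti₀ (sub_pos.mpr hr1) ?_
        calc 1 - ∑' i, r i ≤ 1 - ∑ i ∈ T, r i := by
              linarith [hr.sum_le_tsum T fun i _ => h0 i]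
          _ ≤ ∏ i ∈ T, (1 - r i) :=
              one_sub_sum_le_prod_one_sub T (fun i _ => h0 i) fun i _ => (hlt i).le

theorem summable_norm_multiPow (hx : Summable (‖x ·‖)) (hx1 : ∑' i, ‖x i‖ < 1) :
    Summable (‖multiPow x ·‖) := by
  simpa only [norm_multiPow] using
    summable_multiPow_of_tsum_lt_one (fun i => norm_nonneg (x i)) hx hx1

theorem hasProd_inv_one_sub_tsum_multiPow [CompleteSpace K] (hx : Summable (‖x ·‖))
    (hx1 : ∑' i, ‖x i‖ < 1) :
    HasProd (fun i => (1 - x i)⁻¹) (∑' α, multiPow x α) := by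
  classical
  have hlt : ∀ i, ‖x i‖ < 1 := fun i => (hx.le_tsum i fun j _ => norm_nonneg _).trans_lt hx1
  have hpartial : (fun T : Finset ι => ∏ i ∈ T, (1 - x i)⁻¹) =
      fun T => ∑' α, {α : ι →₀ ℕ | α.support ⊆ T}.indicator (multiPow x) α :=
    funext fun T => (hasSum_indicator_multiPow T fun i _ => hlt i).tsum_eq.symm
  change Filter.Tendsto (fun T : Finset ι => ∏ i ∈ T, (1 - x i)⁻¹) Filter.atTop _
  rw [hpartial]
  refine tendsto_tsum_of_dominated_convergence (summable_norm_multiPow hx hx1) (fun α => ?_)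
    (Filter.Eventually.of_forall fun T α => norm_indicator_le_norm_self _ _)
  refine tendsto_const_nhds.congr' ?_
  filter_upwards [Filter.eventually_ge_atTop α.support] with T hT
  exact (Set.indicator_of_mem hT _).symm

end NormedField

end

/-- the geometric-series function `f(x) = ∑_{α ∈ ℕ^(ℕ)} x^α` is
well defined (the monomial family is absolutely summable) on
`D = {x : ∑_i |x_i| < 1}`, and there `f(x) = ∏_{i} 1/(1 - x_i)`. -/
theorem geometric_series_function (x : ℕ → ℝ)
    (hx : Summable fun i => |x i|) (hx1 : (∑' i, |x i|) < 1) :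
    Summable (fun α : ℕ →₀ ℕ => |∏ i ∈ α.support, x i ^ α i|) ∧
    (∑' α : ℕ →₀ ℕ, ∏ i ∈ α.support, x i ^ α i) = ∏' i, (1 - x i)⁻¹ := by
  simp only [← Real.norm_eq_abs] at hx hx1 ⊢
  exact ⟨summable_norm_multiPow hx hx1,
    (hasProd_inv_one_sub_tsum_multiPow hx hx1).tprod_eq.symm⟩
end

section
/- Let H be a real separable Hilbert space and ‖·‖ a measurable seminorm on H. Then ‖·‖ is dominated by the Hilbert norm: there exists a constant C > 0 such that ‖x‖ ≤ C|x| for all x ∈ H. -/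
open MeasureTheory ProbabilityTheory ENNReal

/-- The standard Gaussian (cylinder) measure on the span of an orthonormal
family `e : Fin n → H`, i.e. the image of the standard Gaussian on `ℝⁿ` under
`c ↦ ∑ i, c i • e i`. -/
noncomputable def stdGaussianOn {H : Type*} [NormedAddCommGroup H]
    [InnerProductSpace ℝ H] [MeasurableSpace H] {n : ℕ} (e : Fin n → H) :
    Measure H :=
  Measure.map (fun c : Fin n → ℝ => ∑ i, c i • e i)
    (Measure.pi fun _ => gaussianReal 0 1)

/-- A seminorm `N` on `H` is *measurable* (in the sense of Gross) if for every
`ε > 0` there is a finite-dimensional projection `P₀` (given by an orthonormal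
family `e₀`) such that for every finite-dimensional projection `P` (given by an
orthonormal family `e`) orthogonal to `P₀`, the standard Gaussian measure of
`{x ∈ range P : N x > ε}` is `< ε`. -/
def MeasurableSeminorm {H : Type*} [NormedAddCommGroup H]
    [InnerProductSpace ℝ H] [MeasurableSpace H] (N : Seminorm ℝ H) : Prop :=
  ∀ ε : ℝ, 0 < ε →
    ∃ (n₀ : ℕ) (e₀ : Fin n₀ → H), Orthonormal ℝ e₀ ∧
      ∀ (n : ℕ) (e : Fin n → H), Orthonormal ℝ e →
        (∀ i j, inner (𝕜 := ℝ) (e i) (e₀ j) = (0 : ℝ)) →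
        stdGaussianOn e {x : H | ε < N x} < ENNReal.ofReal ε

lemma gaussPDF_le (x : ℝ) : gaussianPDF 0 1 x ≤ ENNReal.ofReal (2/5) := by
  rw [gaussianPDF]
  apply ENNReal.ofReal_le_ofReal
  simp only [gaussianPDFReal, NNReal.coe_one, mul_one, sub_zero]
  have h1 : Real.exp (-x^2 / 2) ≤ 1 := by
    rw [Real.exp_le_one_iff]
    nlinarith [sq_nonneg x]
  have h2 : (Real.sqrt (2 * Real.pi))⁻¹ ≤ 2/5 := by
    rw [inv_le_comm₀ (Real.sqrt_pos.mpr (by positivity)) (by norm_num)]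
    rw [Real.le_sqrt (by norm_num)]
    · nlinarith [Real.pi_gt_d6]
    · positivity
  calc (Real.sqrt (2 * Real.pi))⁻¹ * Real.exp (-x^2 / 2)
      ≤ (2/5) * 1 := mul_le_mul h2 h1 (Real.exp_nonneg _) (by norm_num)
    _ = 2/5 := by ring

lemma gauss_tail : ENNReal.ofReal (1/2 : ℝ) ≤ gaussianReal 0 1 {t : ℝ | 1/2 < |t|} := by
  set A : Set ℝ := {t : ℝ | 1/2 < |t|} with hA
  have hAc : Aᶜ = Set.Icc (-(1/2) : ℝ) (1/2) := by
    ext t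
    simp [hA, Set.mem_Icc, abs_le, not_lt]
  have hcompl : gaussianReal 0 1 Aᶜ ≤ ENNReal.ofReal (2/5) := by
    rw [gaussianReal_apply 0 one_ne_zero]
    calc ∫⁻ t in Aᶜ, gaussianPDF 0 1 t
        ≤ ∫⁻ _ in Aᶜ, ENNReal.ofReal (2/5) :=
          setLIntegral_mono measurable_const (fun t _ => gaussPDF_le t)
      _ = ENNReal.ofReal (2/5) * volume Aᶜ := by rw [setLIntegral_const]
      _ ≤ ENNReal.ofReal (2/5) * 1 := by
          apply mul_le_mul_right _ _
          rw [hAc, Real.volume_Icc]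
          norm_num
      _ = ENNReal.ofReal (2/5) := mul_one _
  have huniv : (1 : ℝ≥0∞) ≤ gaussianReal 0 1 A + gaussianReal 0 1 Aᶜ := by
    have := measure_union_le (μ := gaussianReal 0 1) A Aᶜ
    rwa [Set.union_compl_self, measure_univ] at this
  have h1 : (1 : ℝ≥0∞) - ENNReal.ofReal (2/5) ≤ gaussianReal 0 1 A := by
    rw [tsub_le_iff_right]
    exact huniv.trans (add_le_add_right hcompl _)
  refine le_trans ?_ h1
  rw [← ENNReal.ofReal_one, ← ENNReal.ofReal_sub _ (by norm_num : (0:ℝ) ≤ 2/5)]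
  exact ENNReal.ofReal_le_ofReal (by norm_num)

lemma seminorm_sum_le {H : Type*} [NormedAddCommGroup H] [InnerProductSpace ℝ H]
    {ι : Type*} (N : Seminorm ℝ H) (s : Finset ι) (f : ι → H) :
    N (∑ i ∈ s, f i) ≤ ∑ i ∈ s, N (f i) := by
  classical
  induction s using Finset.induction with
  | empty => simp
  | insert _ _ h ih =>
      rw [Finset.sum_insert h, Finset.sum_insert h]
      exact (map_add_le_add N _ _).trans (by gcongr)

/-- every measurable seminorm on a real separable Hilbert space
is dominated by the Hilbert norm. -/
theorem measurable_seminorm_dominated {H : Type*} [NormedAddCommGroup H]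
    [InnerProductSpace ℝ H] [CompleteSpace H]
    [TopologicalSpace.SeparableSpace H] [MeasurableSpace H] [BorelSpace H]
    (N : Seminorm ℝ H) (hN : MeasurableSeminorm N) :
    ∃ C : ℝ, 0 < C ∧ ∀ x : H, N x ≤ C * ‖x‖ := by
  obtain ⟨n₀, e₀, he₀, hP⟩ := hN (1/2) (by norm_num)
  -- Step 1: unit vectors orthogonal to e₀ have N x ≤ 1
  have key : ∀ x : H, ‖x‖ = 1 → (∀ j, inner (𝕜 := ℝ) x (e₀ j) = (0:ℝ)) → N x ≤ 1 := by
    intro x hx hxe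
    by_contra hcon
    push_neg at hcon
    set e : Fin 1 → H := fun _ => x with he
    have heo : Orthonormal ℝ e := by
      constructor
      · intro i; simpa [he] using hx
      · intro i j hij; exact absurd (Subsingleton.elim i j) hij
    have hperp : ∀ i j, inner (𝕜 := ℝ) (e i) (e₀ j) = (0:ℝ) := fun i j => hxe j
    have hlt := hP 1 e heo hperp
    set f : (Fin 1 → ℝ) → H := fun c => ∑ i, c i • e i with hf
    have hfm : Measurable f := by
      apply Continuous.measurable
      apply continuous_finset_sum
      intro i _
      exact (continuous_apply i).smul continuous_const
    set S : Set H := {y : H | 1/2 < N y} with hS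
    have hsub : Set.pi Set.univ (fun _ : Fin 1 => {t : ℝ | 1/2 < |t|}) ⊆ f ⁻¹' S := by
      intro c hc
      have hc0 : 1/2 < |c 0| := hc 0 (Set.mem_univ 0)
      simp only [Set.mem_preimage, hS, Set.mem_setOf_eq, hf]
      rw [Fin.sum_univ_one]
      rw [map_smul_eq_mul]
      calc (1:ℝ)/2 < |c 0| := hc0
        _ = |c 0| * 1 := (mul_one _).symm
        _ ≤ |c 0| * N x := by
            apply mul_le_mul_of_nonneg_left hcon.le (abs_nonneg _)
  -- norm of c 0 matches
    have hchain : ENNReal.ofReal (1/2 : ℝ) ≤ stdGaussianOn e S := by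
      calc ENNReal.ofReal (1/2 : ℝ)
          ≤ gaussianReal 0 1 {t : ℝ | 1/2 < |t|} := gauss_tail
        _ = ∏ _i : Fin 1, gaussianReal 0 1 {t : ℝ | 1/2 < |t|} := by simp
        _ = Measure.pi (fun _ : Fin 1 => gaussianReal 0 1)
              (Set.pi Set.univ fun _ => {t : ℝ | 1/2 < |t|}) := (Measure.pi_pi _ _).symm
        _ ≤ Measure.pi (fun _ : Fin 1 => gaussianReal 0 1) (f ⁻¹' S) := measure_mono hsub
        _ ≤ stdGaussianOn e S := Measure.le_map_apply hfm.aemeasurable S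
    exact absurd (lt_of_le_of_lt hchain hlt) (lt_irrefl _)
  -- Step 2: any vector orthogonal to e₀ has N y ≤ ‖y‖
  have key2 : ∀ y : H, (∀ j, inner (𝕜 := ℝ) y (e₀ j) = (0:ℝ)) → N y ≤ ‖y‖ := by
    intro y hy
    rcases eq_or_ne y 0 with rfl | hy0
    · simp
    · have hny : (0:ℝ) < ‖y‖ := norm_pos_iff.mpr hy0
      set x : H := ‖y‖⁻¹ • y with hx
      have hxn : ‖x‖ = 1 := by
        rw [hx, norm_smul, norm_inv, norm_norm, inv_mul_cancel₀ hny.ne']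
      have hxe : ∀ j, inner (𝕜 := ℝ) x (e₀ j) = (0:ℝ) := by
        intro j
        rw [hx, real_inner_smul_left, hy j, mul_zero]
      have := key x hxn hxe
      have hNx : N x = ‖y‖⁻¹ * N y := by
        rw [hx, map_smul_eq_mul, Real.norm_eq_abs, abs_of_pos (by positivity)]
      rw [hNx] at this
      calc N y = ‖y‖ * (‖y‖⁻¹ * N y) := by field_simp
        _ ≤ ‖y‖ * 1 := by
            apply mul_le_mul_of_nonneg_left this hny.le
        _ = ‖y‖ := mul_one _
  -- Step 3: assemble
  refine ⟨1 + ∑ i, N (e₀ i), by positivity, ?_⟩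
  intro x
  set c : Fin n₀ → ℝ := fun i => inner (𝕜 := ℝ) (e₀ i) x with hc
  set y : H := ∑ i, c i • e₀ i with hy
  have hci : ∀ i, |c i| ≤ ‖x‖ := by
    intro i
    calc |c i| ≤ ‖e₀ i‖ * ‖x‖ := abs_real_inner_le_norm _ _
      _ = ‖x‖ := by rw [he₀.1 i, one_mul]
  have hite := orthonormal_iff_ite.mp he₀
  -- x - y is orthogonal to each e₀ j
  have horth : ∀ j, inner (𝕜 := ℝ) (x - y) (e₀ j) = (0:ℝ) := by
    intro j
    rw [inner_sub_left, hy, sum_inner]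
    have hterm : ∀ i : Fin n₀, inner (𝕜 := ℝ) (c i • e₀ i) (e₀ j)
        = if i = j then c j else 0 := by
      intro i
      rw [real_inner_smul_left, hite i j]
      rcases eq_or_ne i j with rfl | hij
      · simp
      · simp [hij]
    rw [Finset.sum_congr rfl (fun i _ => hterm i), Finset.sum_ite_eq' Finset.univ j fun _ => c j]
    simp only [Finset.mem_univ, if_true]
    rw [hc, real_inner_comm, sub_self]
  have hinner0 : inner (𝕜 := ℝ) y (x - y) = (0:ℝ) := by
    rw [hy, sum_inner]
    apply Finset.sum_eq_zero
    intro i _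
    rw [real_inner_smul_left, real_inner_comm, horth i, mul_zero]
  have hxy : ‖x - y‖ ≤ ‖x‖ := by
    have hsq : ‖x‖^2 = ‖y‖^2 + 2 * inner (𝕜 := ℝ) y (x - y) + ‖x - y‖^2 := by
      have : x = y + (x - y) := by abel
      conv_lhs => rw [this]
      exact norm_add_sq_real _ _
    rw [hinner0] at hsq
    nlinarith [norm_nonneg (x - y), norm_nonneg x, norm_nonneg y]
  have hNy : N y ≤ ‖x‖ * ∑ i, N (e₀ i) := by
    calc N y ≤ ∑ i, N (c i • e₀ i) := seminorm_sum_le N _ _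
      _ = ∑ i, |c i| * N (e₀ i) := by
          refine Finset.sum_congr rfl fun i _ => ?_
          rw [map_smul_eq_mul, Real.norm_eq_abs]
      _ ≤ ∑ i, ‖x‖ * N (e₀ i) := by
          refine Finset.sum_le_sum fun i _ => ?_
          exact mul_le_mul_of_nonneg_right (hci i) (apply_nonneg N _)
      _ = ‖x‖ * ∑ i, N (e₀ i) := by rw [Finset.mul_sum]
  have hNxy : N (x - y) ≤ ‖x‖ := (key2 (x - y) horth).trans hxy
  have hNx : N x ≤ N y + N (x - y) := by
    have : x = y + (x - y) := by abel
    calc N x = N (y + (x - y)) := by rw [← this]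
      _ ≤ N y + N (x - y) := map_add_le_add N _ _
  have := hNx.trans (add_le_add hNy hNxy)
  calc N x ≤ ‖x‖ * ∑ i, N (e₀ i) + ‖x‖ := this
    _ = (1 + ∑ i, N (e₀ i)) * ‖x‖ := by ring
end
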